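/- Let R > 0 and z, ż ∈ ℂ with z ≠ 0. If (1+i)(2ż + (1+i)z) = 2z̄·[(1+i)²z² + 2(1+i)żz]/(R²+|z|²), then either |z| = R or 2ż = -(1+i)z. -/

import Mathlib

/-! Since `z̄ z = |z|²`, the right-hand side is `2|z|² / (R² + |z|²)` times the left-hand side
`(1 + i)((1 + i)z + 2ż)`, so the identity says `(R² - |z|²) · (1 + i)((1 + i)z + 2ż) = 0`. -/

open Complex

lemma sq_eq_sq_or_eq_zero_of_eq_two_mul_sq_mul_div {K : Type*} [Field K] {r n x : K}
    (hD : r ^ 2 + n ^ 2 ≠ 0) (h : x = 2 * n ^ 2 * x / (r ^ 2 + n ^ 2)) :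
    r ^ 2 = n ^ 2 ∨ x = 0 := by
  rw [eq_div_iff hD] at h
  have hfactor : (r ^ 2 - n ^ 2) * x = 0 := by linear_combination h
  simpa only [mul_eq_zero, sub_eq_zero] using hfactor

lemma one_add_I_ne_zero : (1 + I : ℂ) ≠ 0 := by
  intro h
  simpa using congrArg im h

theorem loxodromic_dichotomy_general (R : ℝ) (hR : 0 < R) (z zd : ℂ)
    (h : (1 + Complex.I) * (2 * zd + (1 + Complex.I) * z) =
      2 * (starRingEnd ℂ) z *
        ((1 + Complex.I) ^ 2 * z ^ 2 + 2 * (1 + Complex.I) * zd * z) /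
        ((R : ℂ) ^ 2 + (‖z‖ : ℂ) ^ 2)) :
    ‖z‖ = R ∨ 2 * zd = -(1 + Complex.I) * z := by
  have hD : (R : ℂ) ^ 2 + (‖z‖ : ℂ) ^ 2 ≠ 0 := by
    exact_mod_cast (by positivity : (0 : ℝ) < R ^ 2 + ‖z‖ ^ 2).ne'
  have hnum : 2 * (starRingEnd ℂ) z *
      ((1 + I) ^ 2 * z ^ 2 + 2 * (1 + I) * zd * z) =
      2 * (‖z‖ : ℂ) ^ 2 * ((1 + I) * (2 * zd + (1 + I) * z)) := by
    linear_combination (2 * ((1 + I) ^ 2 * z + 2 * (1 + I) * zd)) * conj_mul' z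
  rw [hnum] at h
  rcases sq_eq_sq_or_eq_zero_of_eq_two_mul_sq_mul_div hD h with hsq | hzero
  · left
    exact ((sq_eq_sq₀ hR.le (norm_nonneg z)).mp (by exact_mod_cast hsq)).symm
  · right
    have hw := (mul_eq_zero.mp hzero).resolve_left one_add_I_ne_zero
    linear_combination hw

/-- The infinitesimal-generator dichotomy for asymptotic Möbius-loxodromic
solutions: either the orbit lies on the equator `|z| = R` or the loxodromic
velocity condition `2ż = -(1+i)z` holds. -/
theorem loxodromic_dichotomy (R : ℝ) (hR : 0 < R) (z zd : ℂ) (hz : z ≠ 0)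
    (h : (1 + Complex.I) * (2 * zd + (1 + Complex.I) * z) =
      2 * (starRingEnd ℂ) z *
        ((1 + Complex.I) ^ 2 * z ^ 2 + 2 * (1 + Complex.I) * zd * z) /
        ((R : ℂ) ^ 2 + (‖z‖ : ℂ) ^ 2)) :
    ‖z‖ = R ∨ 2 * zd = -(1 + Complex.I) * z :=
  loxodromic_dichotomy_general R hR z zd h
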